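/- Let H be a universal graph (an infinite simple graph containing every finite simple graph as an induced subgraph). For a finite DAG G⃗, define Y_H(G⃗) = X_H(G,w), where (G,w) is the underlying graph of G⃗ equipped with the recursive in-degree weight. Then Y_H is a complete invariant for finite DAGs: Y_H(G⃗₁) = Y_H(G⃗₂) if and only if G⃗₁ and G⃗₂ are isomorphic as directed graphs. -/

import Mathlib

/-- Two vertex-weighted graphs are isomorphic: (1) the underlying graphs are
isomorphic, and (2) every graph isomorphism between them preserves the weights. -/
def VWIso {α β : Type} (G₁ : SimpleGraph α) (w₁ : α → ℕ)
    (G₂ : SimpleGraph β) (w₂ : β → ℕ) : Prop :=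
  Nonempty (G₁ ≃g G₂) ∧ ∀ (φ : G₁ ≃g G₂) (v : α), w₂ (φ v) = w₁ v

/-- The underlying simple graph of a directed graph with arc relation `A`, obtained by
forgetting the orientations of the arcs. -/
def underlyingGraph {α : Type} (A : α → α → Prop) : SimpleGraph α where
  Adj u v := u ≠ v ∧ (A u v ∨ A v u)
  symm := by refine ⟨?_⟩; rintro u v ⟨h, h'⟩; exact ⟨h.symm, h'.symm⟩
  loopless := by refine ⟨?_⟩; rintro v ⟨h, -⟩; exact h rfl

/-- A directed graph (arc relation) is acyclic: it has no directed cycles, i.e. the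
transitive closure of the arc relation is irreflexive. -/
def IsAcyclicRel {α : Type} (A : α → α → Prop) : Prop :=
  ∀ v, ¬ Relation.TransGen A v v

/-- `w` is the recursive in-degree weight of the DAG with arc relation `A`:
`w v = 1` if `v` has in-degree `0`, and `w v = 1 + max { w u : u → v an arc }`
otherwise. -/
def WeightSpec {α : Type} (A : α → α → Prop) (w : α → ℕ) : Prop :=
  ∀ v : α,
    ((¬ ∃ u, A u v) → w v = 1) ∧
    (∀ u, A u v → w u + 1 ≤ w v) ∧
    ((∃ u, A u v) → ∃ u, A u v ∧ w v = w u + 1)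

/-- Two directed graphs are isomorphic: there is a bijection of the vertex sets
preserving and reflecting arcs. -/
def DigraphIso {α β : Type} (A₁ : α → α → Prop) (A₂ : β → β → Prop) : Prop :=
  ∃ φ : α ≃ β, ∀ u v, A₁ u v ↔ A₂ (φ u) (φ v)

/-- The `H`-chromatic function of a finite vertex-weighted graph `(G, w)`, as a formal
power series in variables indexed by the vertices of `H`. -/
noncomputable def chromFun {α β : Type} [Fintype α] (G : SimpleGraph α) (w : α → ℕ)
    (H : SimpleGraph β) : (β →₀ ℕ) → ℕ :=
  fun d => Nat.card {φ : G →g H //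
    Finsupp.mapDomain (⇑φ) (Finsupp.equivFunOnFinite.symm w) = d}

/-- A universal graph: an infinite simple graph containing every finite simple graph
as an induced subgraph. -/
def IsUniversal {β : Type} (H : SimpleGraph β) : Prop :=
  Infinite β ∧ ∀ (α : Type) [Fintype α] (G : SimpleGraph α), Nonempty (G ↪g H)

/- ### Auxiliary lemmas -/

lemma weight_pos {α : Type} {A : α → α → Prop} {w : α → ℕ} (hw : WeightSpec A w) (v : α) :
    1 ≤ w v := by
  by_cases h : ∃ u, A u v
  · obtain ⟨u, _, hv⟩ := (hw v).2.2 h; omega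
  · rw [(hw v).1 h]

lemma weight_unique {α : Type} [Finite α] {A : α → α → Prop} (hA : IsAcyclicRel A)
    {w w' : α → ℕ} (hw : WeightSpec A w) (hw' : WeightSpec A w') : w = w' := by
  have ht : IsTrans α (Relation.TransGen A) := inferInstance
  have hi : IsIrrefl α (Relation.TransGen A) := ⟨hA⟩
  have wf := Finite.wellFounded_of_trans_of_irrefl (Relation.TransGen A)
  funext v
  refine wf.induction (C := fun v => w v = w' v) v ?_
  intro v ih
  by_cases h : ∃ u, A u v
  · obtain ⟨u, hu, he⟩ := (hw v).2.2 h
    obtain ⟨u', hu', he'⟩ := (hw' v).2.2 h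
    have h1 := (hw' v).2.1 u hu
    have h2 := (hw v).2.1 u' hu'
    have e1 := ih u (Relation.TransGen.single hu)
    have e2 := ih u' (Relation.TransGen.single hu')
    omega
  · rw [(hw v).1 h, (hw' v).1 h]

lemma le_mapDomain_apply' {α γ : Type} (g : α → γ) (f : α →₀ ℕ) (a : α) :
    f a ≤ Finsupp.mapDomain g f (g a) := by
  classical
  rw [Finsupp.mapDomain, Finsupp.sum_apply, Finsupp.sum]
  by_cases h : a ∈ f.support
  · calc f a = Finsupp.single (g a) (f a) (g a) := by simp
    _ ≤ ∑ x ∈ f.support, Finsupp.single (g x) (f x) (g a) :=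
      Finset.single_le_sum (f := fun x => Finsupp.single (g x) (f x) (g a))
        (fun i _ => Nat.zero_le _) h
  · simp [Finsupp.notMem_support_iff.mp h]

lemma support_equivFun' {α : Type} [Fintype α] (w : α → ℕ) (hw : ∀ v, 1 ≤ w v) :
    (Finsupp.equivFunOnFinite.symm w).support = Finset.univ := by
  ext a
  simp only [Finsupp.mem_support_iff, Finset.mem_univ, iff_true]
  have := hw a
  simp only [Finsupp.equivFunOnFinite_symm_apply_apply]
  omega

lemma mapDomain_equivFun {α β : Type} [Fintype α] [Fintype β] (e : α ≃ β) (w₁ : α → ℕ)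
    (w₂ : β → ℕ) (hw : ∀ a, w₂ (e a) = w₁ a) :
    Finsupp.mapDomain ⇑e (Finsupp.equivFunOnFinite.symm w₁) =
      Finsupp.equivFunOnFinite.symm w₂ := by
  ext b
  rw [Finsupp.mapDomain_equiv_apply]
  have : w₂ (e (e.symm b)) = w₁ (e.symm b) := hw _
  simpa using this.symm

lemma chromFun_eq_of_iso {α β γ : Type} [Fintype α] [Fintype β]
    {G₁ : SimpleGraph α} {G₂ : SimpleGraph β} {w₁ : α → ℕ} {w₂ : β → ℕ}
    (H : SimpleGraph γ) (e : G₁ ≃g G₂) (hw : ∀ a, w₂ (e a) = w₁ a) :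
    chromFun G₁ w₁ H = chromFun G₂ w₂ H := by
  funext d
  apply Nat.card_congr
  refine
    { toFun := fun p => ⟨p.1.comp e.symm.toHom, ?_⟩
      invFun := fun p => ⟨p.1.comp e.toHom, ?_⟩
      left_inv := ?_
      right_inv := ?_ }
  · rcases p with ⟨ψ, hψ⟩
    have hc : ⇑(ψ.comp e.symm.toHom) = ⇑ψ ∘ ⇑e.symm.toEquiv := rfl
    rw [hc, Finsupp.mapDomain_comp,
      mapDomain_equivFun e.symm.toEquiv w₂ w₁ (fun b => by
        have := hw (e.symm.toEquiv b); simpa using this.symm), hψ]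
  · rcases p with ⟨ψ, hψ⟩
    have hc : ⇑(ψ.comp e.toHom) = ⇑ψ ∘ ⇑e.toEquiv := rfl
    rw [hc, Finsupp.mapDomain_comp, mapDomain_equivFun e.toEquiv w₁ w₂ hw, hψ]
  · rintro ⟨ψ, hψ⟩
    ext v
    simp
  · rintro ⟨ψ, hψ⟩
    ext v
    simp

lemma homset_finite' {α γ : Type} [Fintype α] (G : SimpleGraph α) (H : SimpleGraph γ)
    (w : α → ℕ) (hw : ∀ v, 1 ≤ w v) (d : γ →₀ ℕ) :
    Finite {φ : G →g H //
      Finsupp.mapDomain (⇑φ) (Finsupp.equivFunOnFinite.symm w) = d} := by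
  have key : ∀ (p : {φ : G →g H //
      Finsupp.mapDomain (⇑φ) (Finsupp.equivFunOnFinite.symm w) = d}) (a : α),
      p.1 a ∈ d.support := by
    rintro ⟨φ, hφ⟩ a
    have h1 := le_mapDomain_apply' (⇑φ) (Finsupp.equivFunOnFinite.symm w) a
    rw [hφ] at h1
    simp only [Finsupp.equivFunOnFinite_symm_apply_apply] at h1
    have := hw a
    simp only [Finsupp.mem_support_iff]
    omega
  have : Function.Injective
      (fun p : {φ : G →g H //
        Finsupp.mapDomain (⇑φ) (Finsupp.equivFunOnFinite.symm w) = d} =>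
        (fun a => (⟨p.1 a, key p a⟩ : {x // x ∈ d.support}))) := by
    rintro ⟨φ, hφ⟩ ⟨ψ, hψ⟩ h
    ext a
    exact congrArg Subtype.val (congrFun h a)
  exact Finite.of_injective _ this

lemma exists_hom_of_chromFun_eq {α β γ : Type} [Fintype α] [Fintype β]
    (H : SimpleGraph γ) (hH : IsUniversal H)
    (G₁ : SimpleGraph α) (G₂ : SimpleGraph β) (w₁ : α → ℕ) (w₂ : β → ℕ)
    (h₁ : ∀ a, 1 ≤ w₁ a)
    (hEq : chromFun G₁ w₁ H = chromFun G₂ w₂ H) :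
    ∃ (ι : G₁ ↪g H) (ψ : G₂ →g H),
      Finsupp.mapDomain (⇑ψ) (Finsupp.equivFunOnFinite.symm w₂)
        = Finsupp.mapDomain (⇑ι) (Finsupp.equivFunOnFinite.symm w₁) := by
  classical
  obtain ⟨ι⟩ := hH.2 α G₁
  set d₁ := Finsupp.mapDomain (⇑ι) (Finsupp.equivFunOnFinite.symm w₁) with hd₁
  have hfin : Finite {φ : G₁ →g H //
      Finsupp.mapDomain (⇑φ) (Finsupp.equivFunOnFinite.symm w₁) = d₁} :=
    homset_finite' G₁ H w₁ h₁ d₁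
  have hnon : Nonempty {φ : G₁ →g H //
      Finsupp.mapDomain (⇑φ) (Finsupp.equivFunOnFinite.symm w₁) = d₁} :=
    ⟨⟨ι.toHom, rfl⟩⟩
  have hne : chromFun G₁ w₁ H d₁ ≠ 0 := by
    simp only [chromFun]
    exact Nat.card_pos.ne'
  rw [hEq] at hne
  have := Nat.card_ne_zero.mp hne
  obtain ⟨⟨ψ, hψ⟩⟩ := this.1
  exact ⟨ι, ψ, hψ⟩

lemma support_mapDomain_emb {α γ : Type} [Fintype α] [DecidableEq γ] (f : α → γ)
    (hf : Function.Injective f) (w : α → ℕ) (hw : ∀ v, 1 ≤ w v) :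
    (Finsupp.mapDomain f (Finsupp.equivFunOnFinite.symm w)).support
      = Finset.univ.image f := by
  classical
  rw [Finsupp.mapDomain_support_of_injective hf, support_equivFun' w hw]

lemma card_le_of_chromFun_eq {α β γ : Type} [Fintype α] [Fintype β]
    (H : SimpleGraph γ) (hH : IsUniversal H)
    (G₁ : SimpleGraph α) (G₂ : SimpleGraph β) (w₁ : α → ℕ) (w₂ : β → ℕ)
    (h₁ : ∀ a, 1 ≤ w₁ a) (h₂ : ∀ b, 1 ≤ w₂ b)
    (hEq : chromFun G₁ w₁ H = chromFun G₂ w₂ H) :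
    Fintype.card α ≤ Fintype.card β := by
  classical
  obtain ⟨ι, ψ, hψ⟩ := exists_hom_of_chromFun_eq H hH G₁ G₂ w₁ w₂ h₁ hEq
  have hsupp := support_mapDomain_emb (⇑ι) ι.injective w₁ h₁
  have hsub : (Finsupp.mapDomain (⇑ι) (Finsupp.equivFunOnFinite.symm w₁)).support
      ⊆ (Finsupp.equivFunOnFinite.symm w₂).support.image (⇑ψ) := by
    rw [← hψ]; exact Finsupp.mapDomain_support
  rw [hsupp, support_equivFun' w₂ h₂] at hsub
  calc Fintype.card α = (Finset.univ.image (⇑ι)).card := by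
        rw [Finset.card_image_of_injective _ ι.injective, Finset.card_univ]
    _ ≤ (Finset.univ.image (⇑ψ)).card := Finset.card_le_card hsub
    _ ≤ Fintype.card β := by
        simpa using Finset.card_image_le (s := (Finset.univ : Finset β)) (f := ⇑ψ)

lemma key_embedding {α β γ : Type} [Fintype α] [Fintype β]
    (H : SimpleGraph γ) (hH : IsUniversal H)
    (G₁ : SimpleGraph α) (G₂ : SimpleGraph β) (w₁ : α → ℕ) (w₂ : β → ℕ)
    (h₁ : ∀ a, 1 ≤ w₁ a) (h₂ : ∀ b, 1 ≤ w₂ b)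
    (hcard : Fintype.card β ≤ Fintype.card α)
    (hEq : chromFun G₁ w₁ H = chromFun G₂ w₂ H) :
    ∃ e : β → α, Function.Injective e ∧
      (∀ b b', G₂.Adj b b' → G₁.Adj (e b) (e b')) ∧ (∀ b, w₁ (e b) = w₂ b) := by
  classical
  obtain ⟨ι, ψ, hψ⟩ := exists_hom_of_chromFun_eq H hH G₁ G₂ w₁ w₂ h₁ hEq
  have hsupp := support_mapDomain_emb (⇑ι) ι.injective w₁ h₁
  have hsub : (Finset.univ.image (⇑ι)) ⊆ (Finset.univ.image (⇑ψ)) := by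
    rw [← hsupp, ← hψ]
    refine Finsupp.mapDomain_support.trans ?_
    rw [support_equivFun' w₂ h₂]
  have hψinj : Function.Injective ψ := by
    have h1 : Fintype.card α ≤ (Finset.univ.image (⇑ψ)).card := by
      calc Fintype.card α = (Finset.univ.image (⇑ι)).card := by
            rw [Finset.card_image_of_injective _ ι.injective, Finset.card_univ]
      _ ≤ _ := Finset.card_le_card hsub
    have h2 : (Finset.univ.image (⇑ψ)).card ≤ Fintype.card β := by
      simpa using Finset.card_image_le (s := (Finset.univ : Finset β)) (f := ⇑ψ)
    have : (Finset.univ.image (⇑ψ)).card = (Finset.univ : Finset β).card := by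
      rw [Finset.card_univ]; omega
    have := Finset.card_image_iff.mp this
    intro x y hxy
    exact this (Finset.mem_coe.mpr (Finset.mem_univ x))
      (Finset.mem_coe.mpr (Finset.mem_univ y)) hxy
  have himg : (Finset.univ.image (⇑ψ)) = (Finset.univ.image (⇑ι)) := by
    apply Finset.eq_of_subset_of_card_le ?_ ?_ |>.symm
    · exact hsub
    · rw [Finset.card_image_of_injective _ ι.injective,
        Finset.card_image_of_injective _ hψinj, Finset.card_univ, Finset.card_univ]
      exact hcard
  have hmem : ∀ b : β, ∃ a : α, ι a = ψ b := by
    intro b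
    have : ψ b ∈ Finset.univ.image (⇑ι) := himg ▸ Finset.mem_image_of_mem _ (Finset.mem_univ b)
    obtain ⟨a, -, ha⟩ := Finset.mem_image.mp this
    exact ⟨a, ha⟩
  choose e he using hmem
  refine ⟨e, ?_, ?_, ?_⟩
  · intro b b' hbb'
    have : ψ b = ψ b' := by rw [← he b, ← he b', hbb']
    exact hψinj this
  · intro b b' hadj
    have : H.Adj (ψ b) (ψ b') := ψ.map_adj hadj
    rw [← he b, ← he b'] at this
    exact ι.map_adj_iff.mp this
  · intro b
    have h1 : Finsupp.mapDomain (⇑ψ) (Finsupp.equivFunOnFinite.symm w₂) (ψ b) = w₂ b := by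
      rw [Finsupp.mapDomain_apply hψinj]; simp
    have h2 : Finsupp.mapDomain (⇑ι) (Finsupp.equivFunOnFinite.symm w₁) (ι (e b)) = w₁ (e b) := by
      rw [Finsupp.mapDomain_apply ι.injective]; simp
    rw [hψ, ← he b] at h1
    rw [h2] at h1
    exact h1

lemma arc_iff {α : Type} {A : α → α → Prop} (hA : IsAcyclicRel A) {w : α → ℕ}
    (hw : WeightSpec A w) (u v : α) :
    A u v ↔ (underlyingGraph A).Adj u v ∧ w u < w v := by
  constructor
  · intro h
    have hne : u ≠ v := fun e => hA v (Relation.TransGen.single (show A v v from e ▸ h))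
    exact ⟨⟨hne, Or.inl h⟩, by have := (hw v).2.1 u h; omega⟩
  · rintro ⟨⟨hne, h | h⟩, hlt⟩
    · exact h
    · have := (hw u).2.1 v h; omega

lemma weightSpec_transfer {α β : Type} {A₁ : α → α → Prop} {A₂ : β → β → Prop}
    (φ : α ≃ β) (h : ∀ u v, A₁ u v ↔ A₂ (φ u) (φ v)) {w₁ : α → ℕ}
    (hw : WeightSpec A₁ w₁) : WeightSpec A₂ (w₁ ∘ φ.symm) := by
  intro v
  have hv : ∀ u, A₂ u v ↔ A₁ (φ.symm u) (φ.symm v) := fun u => by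
    rw [h (φ.symm u) (φ.symm v)]; simp
  have hex : (∃ u, A₂ u v) ↔ ∃ u, A₁ u (φ.symm v) := by
    constructor
    · rintro ⟨u, hu⟩; exact ⟨φ.symm u, (hv u).mp hu⟩
    · rintro ⟨u, hu⟩; exact ⟨φ u, (hv (φ u)).mpr (by simpa using hu)⟩
  refine ⟨?_, ?_, ?_⟩
  · intro hne
    exact (hw (φ.symm v)).1 (fun hx => hne (hex.mpr hx))
  · intro u hu
    exact (hw (φ.symm v)).2.1 (φ.symm u) ((hv u).mp hu)
  · intro hx
    obtain ⟨u, hu, he⟩ := (hw (φ.symm v)).2.2 (hex.mp hx)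
    exact ⟨φ u, (hv (φ u)).mpr (by simpa using hu), by simpa using he⟩

/-- For a universal graph `H`, the invariant `Y_H(G⃗) = X_H(G, w)` (where `(G, w)` is
the underlying graph of the DAG `G⃗` with the recursive in-degree weight) is a complete
invariant for finite DAGs. -/
theorem stmt_10 {γ : Type} (H : SimpleGraph γ) (hH : IsUniversal H)
    {α β : Type} [Fintype α] [Fintype β]
    (A₁ : α → α → Prop) (A₂ : β → β → Prop)
    (hA₁ : IsAcyclicRel A₁) (hA₂ : IsAcyclicRel A₂)
    (w₁ : α → ℕ) (w₂ : β → ℕ) (hw₁ : WeightSpec A₁ w₁) (hw₂ : WeightSpec A₂ w₂) :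
    chromFun (underlyingGraph A₁) w₁ H = chromFun (underlyingGraph A₂) w₂ H ↔
      DigraphIso A₁ A₂ := by
  constructor
  · intro hEq
    classical
    have h₁ := weight_pos hw₁
    have h₂ := weight_pos hw₂
    have hc1 : Fintype.card α ≤ Fintype.card β :=
      card_le_of_chromFun_eq H hH _ _ w₁ w₂ h₁ h₂ hEq
    have hc2 : Fintype.card β ≤ Fintype.card α :=
      card_le_of_chromFun_eq H hH _ _ w₂ w₁ h₂ h₁ hEq.symm
    obtain ⟨e, einj, ehom, ew⟩ :=
      key_embedding H hH (underlyingGraph A₁) (underlyingGraph A₂) w₁ w₂ h₁ h₂ hc2 hEq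
    obtain ⟨e', e'inj, e'hom, -⟩ :=
      key_embedding H hH (underlyingGraph A₂) (underlyingGraph A₁) w₂ w₁ h₂ h₁ hc1 hEq.symm
    have ebij : Function.Bijective e :=
      (Fintype.bijective_iff_injective_and_card e).mpr ⟨einj, le_antisymm hc2 hc1⟩
    set G₁ := underlyingGraph A₁ with hG₁
    set G₂ := underlyingGraph A₂ with hG₂
    set F : {p : β × β // G₂.Adj p.1 p.2} → {p : α × α // G₁.Adj p.1 p.2} :=
      fun p => ⟨(e p.1.1, e p.1.2), ehom _ _ p.2⟩ with hF
    set F' : {p : α × α // G₁.Adj p.1 p.2} → {p : β × β // G₂.Adj p.1 p.2} :=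
      fun p => ⟨(e' p.1.1, e' p.1.2), e'hom _ _ p.2⟩ with hF'
    have hFinj : Function.Injective F := by
      rintro ⟨⟨a, b⟩, h⟩ ⟨⟨c, d⟩, h'⟩ hFe
      simp only [hF, Subtype.mk.injEq, Prod.mk.injEq] at hFe ⊢
      exact ⟨einj hFe.1, einj hFe.2⟩
    have hF'inj : Function.Injective F' := by
      rintro ⟨⟨a, b⟩, h⟩ ⟨⟨c, d⟩, h'⟩ hFe
      simp only [hF', Subtype.mk.injEq, Prod.mk.injEq] at hFe ⊢
      exact ⟨e'inj hFe.1, e'inj hFe.2⟩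
    have hFcard : Nat.card {p : β × β // G₂.Adj p.1 p.2}
        = Nat.card {p : α × α // G₁.Adj p.1 p.2} :=
      le_antisymm (Nat.card_le_card_of_injective F hFinj)
        (Nat.card_le_card_of_injective F' hF'inj)
    have hFsurj : Function.Surjective F :=
      ((Nat.bijective_iff_injective_and_card F).mpr ⟨hFinj, hFcard⟩).2
    set eq := Equiv.ofBijective e ebij with heq
    refine ⟨eq.symm, ?_⟩
    intro u v
    have heapp : ∀ a : α, e (eq.symm a) = a := fun a => eq.apply_symm_apply a
    have hAdj : G₁.Adj u v ↔ G₂.Adj (eq.symm u) (eq.symm v) := by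
      constructor
      · intro h
        obtain ⟨⟨⟨b, b'⟩, hbb⟩, hFe⟩ := hFsurj ⟨(u, v), h⟩
        have hb : e b = u := congrArg (fun p => p.1.1) hFe
        have hb' : e b' = v := congrArg (fun p => p.1.2) hFe
        have h1 : eq.symm u = b := by
          rw [Equiv.symm_apply_eq]; exact hb.symm
        have h2 : eq.symm v = b' := by
          rw [Equiv.symm_apply_eq]; exact hb'.symm
        rw [h1, h2]; exact hbb
      · intro h
        have := ehom _ _ h
        rwa [heapp u, heapp v] at this
    have weq : ∀ a : α, w₂ (eq.symm a) = w₁ a := fun a => by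
      rw [← ew (eq.symm a), heapp a]
    rw [arc_iff hA₁ hw₁, arc_iff hA₂ hw₂, hAdj, ← weq u, ← weq v]
  · rintro ⟨φ, hφ⟩
    have hspec := weightSpec_transfer φ hφ hw₁
    have hwq : (w₁ ∘ φ.symm) = w₂ := weight_unique hA₂ hspec hw₂
    have hadj : ∀ {u v : α}, (underlyingGraph A₂).Adj (φ u) (φ v) ↔
        (underlyingGraph A₁).Adj u v := by
      intro u v
      constructor
      · rintro ⟨hne, h⟩
        refine ⟨fun hc => hne (congrArg φ hc), ?_⟩
        rcases h with h | h
        · exact Or.inl ((hφ u v).mpr h)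
        · exact Or.inr ((hφ v u).mpr h)
      · rintro ⟨hne, h⟩
        exact ⟨fun hc => hne (φ.injective hc), h.imp (hφ u v).mp (hφ v u).mp⟩
    exact chromFun_eq_of_iso H ⟨φ, hadj⟩ (fun a => by
      have := congrFun hwq (φ a)
      simpa using this.symm)
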